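/- A k-mutation increases the number of crossings of S by 2k - n + 3. That is, if a point p1 moves continuously across the segment p2p3 (with p1 on a side of the line through p2 and p3 containing exactly k other points of S before the mutation, so n - k - 3 points on the other side), then the number of convex quadrilaterals determined by S after the mutation equals the number before, plus 2k - n + 3. -/
import Mathlib


open Finset
open scoped Classical

abbrev Pt : Type := ℝ × ℝ

/-- Twice the signed area of the triangle `a b c`; its sign is the orientation. -/
noncomputable def det3 (a b c : Pt) : ℝ :=
  (b.1 - a.1) * (c.2 - a.2) - (b.2 - a.2) * (c.1 - a.1)

/-- `S` is in general position: no three of its points are collinear. -/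
def GenPos (S : Finset Pt) : Prop :=
  ∀ a ∈ S, ∀ b ∈ S, ∀ c ∈ S, a ≠ b → a ≠ c → b ≠ c → det3 a b c ≠ 0

/-- A finite point set is in convex position. -/
def ConvexPos (Q : Finset Pt) : Prop :=
  ∀ x ∈ Q, x ∉ convexHull ℝ (↑(Q.erase x) : Set Pt)

/-- `crN S` : the number of 4-element subsets of `S` in convex position. -/
noncomputable def crN (S : Finset Pt) : ℕ :=
  ((S.powersetCard 4).filter ConvexPos).card

/-- Number of points of `S` strictly to the left of the directed line `p → q`. -/
noncomputable def sideCount (S : Finset Pt) (p q : Pt) : ℕ :=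
  (S.filter (fun x => 0 < det3 p q x)).card

/-- `{p, q}` is a `j`-edge of `S`: exactly `j` points of `S` lie in one of the open
half-planes bounded by the line through `p` and `q`. -/
def IsJEdge (S : Finset Pt) (j : ℕ) (p q : Pt) : Prop :=
  p ∈ S ∧ q ∈ S ∧ p ≠ q ∧ (sideCount S p q = j ∨ sideCount S q p = j)

/-- `ej S j` : the number of (unordered) `j`-edges of `S`. -/
noncomputable def ej (S : Finset Pt) (j : ℕ) : ℕ :=
  ((S.powersetCard 2).filter (fun e => ∃ p q : Pt, e = {p, q} ∧ IsJEdge S j p q)).card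

/-- `Ek S k` : the number of `(≤ k)`-edges of `S`. -/
noncomputable def Ek (S : Finset Pt) (k : ℕ) : ℕ :=
  ((S.powersetCard 2).filter
    (fun e => ∃ p q : Pt, e = {p, q} ∧ ∃ j ≤ k, IsJEdge S j p q)).card

/-- The vertices of the convex hull of `S` (its extreme points). -/
noncomputable def hullVertices (S : Finset Pt) : Finset Pt :=
  S.filter (fun x => x ∉ convexHull ℝ (↑(S.erase x) : Set Pt))

/-- Orientation of the labelled triple `a b c` of the configuration `P`. -/
noncomputable def detI {n : ℕ} (P : Fin n → Pt) (a b c : Fin n) : ℝ :=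
  det3 (P a) (P b) (P c)

/-- A labelled configuration is in general position. -/
def GenPosI {n : ℕ} (P : Fin n → Pt) : Prop :=
  ∀ a b c : Fin n, a ≠ b → a ≠ c → b ≠ c → detI P a b c ≠ 0

/-- Number of 4-element subsets of the labelled configuration in convex position. -/
noncomputable def crI {n : ℕ} (P : Fin n → Pt) : ℕ :=
  (((univ : Finset (Fin n)).powersetCard 4).filter (fun Q => ConvexPos (Q.image P))).card

/-- Number of points of the configuration strictly to the left of the directed line
`P a → P b`. -/
noncomputable def sideCountI {n : ℕ} (P : Fin n → Pt) (a b : Fin n) : ℕ :=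
  ((univ : Finset (Fin n)).filter (fun l => 0 < det3 (P a) (P b) (P l))).card

/-- Number of (unordered, labelled) `m`-edges of the configuration `P`. -/
noncomputable def ejI {n : ℕ} (P : Fin n → Pt) (m : ℕ) : ℕ :=
  (((univ : Finset (Fin n)).powersetCard 2).filter
    (fun e => ∃ a b : Fin n, e = {a, b} ∧ a ≠ b ∧
      (sideCountI P a b = m ∨ sideCountI P b a = m))).card

lemma det3_cyc (a b c : Pt) : det3 a b c = det3 b c a := by simp [det3]; ring
lemma det3_swap (a b c : Pt) : det3 a c b = -det3 a b c := by simp [det3]; ring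
lemma det3_self₁ (a b : Pt) : det3 a b a = 0 := by simp [det3]
lemma det3_self₂ (a b : Pt) : det3 a b b = 0 := by simp [det3]; ring
lemma det3_self₀ (a b : Pt) : det3 a a b = 0 := by simp [det3]

lemma det3_affine (u v p q r : Pt) (α β γ : ℝ) (h : α + β + γ = 1) :
    det3 u v (α • p + β • q + γ • r) = α * det3 u v p + β * det3 u v q + γ * det3 u v r := by
  have hγ : γ = 1 - α - β := by linarith
  subst hγ
  simp [det3, Prod.smul_fst, Prod.smul_snd, smul_eq_mul]
  ring

lemma det3_affine2 (u v p q : Pt) (α β : ℝ) (h : α + β = 1) :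
    det3 u v (α • p + β • q) = α * det3 u v p + β * det3 u v q := by
  have := det3_affine u v p q q α β 0 (by linarith)
  simpa using this

lemma det3_sum (p q r x : Pt) : det3 q r x + det3 r p x + det3 p q x = det3 p q r := by
  simp [det3]; ring

lemma det3_cramer (p q r x : Pt) :
    (det3 q r x) • p + (det3 r p x) • q + (det3 p q x) • r = (det3 p q r) • x := by
  apply Prod.ext <;> · simp [det3, Prod.smul_fst, Prod.smul_snd, smul_eq_mul]; ring

lemma mem_tri (p q r x : Pt) :
    x ∈ convexHull ℝ ({p, q, r} : Set Pt) ↔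
      ∃ α β γ : ℝ, 0 ≤ α ∧ 0 ≤ β ∧ 0 ≤ γ ∧ α + β + γ = 1 ∧ α • p + β • q + γ • r = x := by
  have h1 : ({p, q, r} : Set Pt) = insert p {q, r} := rfl
  rw [h1, convexHull_insert ⟨q, by simp⟩, convexHull_pair, mem_convexJoin]
  constructor
  · rintro ⟨y, hy, z, hz, hxz⟩
    rw [Set.mem_singleton_iff] at hy
    subst hy
    obtain ⟨s1, s2, hs1, hs2, hs, rfl⟩ := hz
    obtain ⟨t1, t2, ht1, ht2, ht, rfl⟩ := hxz
    refine ⟨t1, t2 * s1, t2 * s2, ht1, by positivity, by positivity, by nlinarith, ?_⟩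
    simp [smul_add, smul_smul]
    abel
  · rintro ⟨α, β, γ, hα, hβ, hγ, hsum, rfl⟩
    by_cases hβγ : β + γ = 0
    · refine ⟨p, rfl, q, ⟨1, 0, by norm_num⟩, ?_⟩
      have hβ0 : β = 0 := by linarith
      have hγ0 : γ = 0 := by linarith
      refine ⟨1, 0, by norm_num, by norm_num, by norm_num, ?_⟩
      have hα1 : α = 1 := by linarith
      simp [hβ0, hγ0, hα1]
    · have hβγ' : 0 < β + γ := lt_of_le_of_ne (by linarith) (Ne.symm hβγ)
      refine ⟨p, rfl, (β/(β+γ)) • q + (γ/(β+γ)) • r,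
        ⟨β/(β+γ), γ/(β+γ), by positivity, by positivity, by field_simp, rfl⟩,
        ⟨α, β+γ, hα, le_of_lt hβγ', by linarith, ?_⟩⟩
      rw [smul_add, smul_smul, smul_smul]
      field_simp
      abel

lemma mem_triangle_iff (p q r x : Pt) (hD : det3 p q r ≠ 0) :
    x ∈ convexHull ℝ ({p, q, r} : Set Pt) ↔
      0 ≤ det3 q r x * det3 p q r ∧ 0 ≤ det3 r p x * det3 p q r ∧
        0 ≤ det3 p q x * det3 p q r := by
  set D := det3 p q r with hDdef
  rw [mem_tri]
  constructor
  · rintro ⟨α, β, γ, hα, hβ, hγ, hsum, rfl⟩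
    have e1 : det3 q r (α • p + β • q + γ • r) = α * D := by
      rw [det3_affine q r p q r α β γ hsum, det3_self₂, det3_self₁]
      rw [show det3 q r p = D from by rw [hDdef, det3_cyc, det3_cyc]]
      ring
    have e2 : det3 r p (α • p + β • q + γ • r) = β * D := by
      rw [det3_affine r p p q r α β γ hsum, det3_self₂, det3_self₁]
      rw [show det3 r p q = D from by rw [hDdef, det3_cyc]]
      ring
    have e3 : det3 p q (α • p + β • q + γ • r) = γ * D := by
      rw [det3_affine p q p q r α β γ hsum, det3_self₂, det3_self₁]
      ring
    rw [e1, e2, e3]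
    refine ⟨by nlinarith [sq_nonneg D], by nlinarith [sq_nonneg D], by nlinarith [sq_nonneg D]⟩
  · rintro ⟨h1, h2, h3⟩
    refine ⟨det3 q r x / D, det3 r p x / D, det3 p q x / D, ?_, ?_, ?_, ?_, ?_⟩
    · rw [div_nonneg_iff]
      rcases hD.lt_or_gt with h | h
      · right; constructor <;> nlinarith
      · left; constructor <;> nlinarith
    · rw [div_nonneg_iff]
      rcases hD.lt_or_gt with h | h
      · right; constructor <;> nlinarith
      · left; constructor <;> nlinarith
    · rw [div_nonneg_iff]
      rcases hD.lt_or_gt with h | h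
      · right; constructor <;> nlinarith
      · left; constructor <;> nlinarith
    · field_simp
      exact det3_sum p q r x
    · have h := det3_cramer p q r x
      have h2 := congrArg (fun y : Pt => D⁻¹ • y) h
      simp only [smul_add, smul_smul] at h2
      rw [← hDdef, inv_mul_cancel₀ hD, one_smul] at h2
      simpa [div_eq_inv_mul] using h2

lemma sign_key (e1 e2 e3 e4 : ℝ) (h1 : e1 ≠ 0) (h2 : e2 ≠ 0) (h3 : e3 ≠ 0) (h4 : e4 ≠ 0) :
    (¬(0 ≤ e2 * e1 ∧ 0 ≤ -e3 * e1 ∧ 0 ≤ e4 * e1) ∧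
     ¬(0 ≤ e1 * e2 ∧ 0 ≤ e3 * e2 ∧ 0 ≤ -e4 * e2) ∧
     ¬(0 ≤ -e1 * e3 ∧ 0 ≤ e2 * e3 ∧ 0 ≤ e4 * e3) ∧
     ¬(0 ≤ e1 * e4 ∧ 0 ≤ -e2 * e4 ∧ 0 ≤ e3 * e4)) ↔ 0 < e1 * e2 * e3 * e4 := by
  have hprodne : e1 * e2 * e3 * e4 ≠ 0 := by positivity
  constructor
  · intro ⟨hA, hB, hC, hD4⟩
    rcases lt_trichotomy (e1 * e2 * e3 * e4) 0 with hneg | hz | hpos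
    · exfalso
      rcases h1.lt_or_gt with s1 | s1 <;> rcases h2.lt_or_gt with s2 | s2 <;>
        rcases h3.lt_or_gt with s3 | s3 <;> rcases h4.lt_or_gt with s4 | s4
      all_goals first
        | exact hA ⟨by nlinarith, by nlinarith, by nlinarith⟩
        | exact hB ⟨by nlinarith, by nlinarith, by nlinarith⟩
        | exact hC ⟨by nlinarith, by nlinarith, by nlinarith⟩
        | exact hD4 ⟨by nlinarith, by nlinarith, by nlinarith⟩
        | nlinarith [mul_pos (mul_pos (mul_pos s1 s2) s3) s4]
        | nlinarith [mul_pos (mul_pos (mul_pos_of_neg_of_neg s1 s2) s3) s4]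
        | nlinarith [mul_pos (mul_pos_of_neg_of_neg s1 s3) (mul_pos s2 s4)]
        | nlinarith [mul_pos (mul_pos_of_neg_of_neg s1 s4) (mul_pos s2 s3)]
        | nlinarith [mul_pos (mul_pos_of_neg_of_neg s2 s3) (mul_pos s1 s4)]
        | nlinarith [mul_pos (mul_pos_of_neg_of_neg s2 s4) (mul_pos s1 s3)]
        | nlinarith [mul_pos (mul_pos s1 s2) (mul_pos_of_neg_of_neg s3 s4)]
        | nlinarith [mul_pos (mul_pos_of_neg_of_neg s1 s2) (mul_pos_of_neg_of_neg s3 s4)]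
    · exact absurd hz hprodne
    · exact hpos
  · intro hpos
    refine ⟨fun ⟨x, y, z⟩ => ?_, fun ⟨x, y, z⟩ => ?_, fun ⟨x, y, z⟩ => ?_, fun ⟨x, y, z⟩ => ?_⟩
    · have hx := (mul_ne_zero h2 h1).symm.lt_of_le x
      have hy := (mul_ne_zero (neg_ne_zero.mpr h3) h1).symm.lt_of_le y
      have hz := (mul_ne_zero h4 h1).symm.lt_of_le z
      nlinarith [mul_pos (mul_pos hx hy) hz, mul_pos hpos (mul_self_pos.mpr h1)]
    · have hx := (mul_ne_zero h1 h2).symm.lt_of_le x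
      have hy := (mul_ne_zero h3 h2).symm.lt_of_le y
      have hz := (mul_ne_zero (neg_ne_zero.mpr h4) h2).symm.lt_of_le z
      nlinarith [mul_pos (mul_pos hx hy) hz, mul_pos hpos (mul_self_pos.mpr h2)]
    · have hx := (mul_ne_zero (neg_ne_zero.mpr h1) h3).symm.lt_of_le x
      have hy := (mul_ne_zero h2 h3).symm.lt_of_le y
      have hz := (mul_ne_zero h4 h3).symm.lt_of_le z
      nlinarith [mul_pos (mul_pos hx hy) hz, mul_pos hpos (mul_self_pos.mpr h3)]
    · have hx := (mul_ne_zero h1 h4).symm.lt_of_le x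
      have hy := (mul_ne_zero (neg_ne_zero.mpr h2) h4).symm.lt_of_le y
      have hz := (mul_ne_zero h3 h4).symm.lt_of_le z
      nlinarith [mul_pos (mul_pos hx hy) hz, mul_pos hpos (mul_self_pos.mpr h4)]

lemma ne_of_det3 {a b c : Pt} (h : det3 a b c ≠ 0) : a ≠ b ∧ a ≠ c ∧ b ≠ c := by
  refine ⟨?_, ?_, ?_⟩ <;> rintro rfl
  · exact h (det3_self₀ a c)
  · exact h (det3_self₁ a b)
  · exact h (det3_self₂ a b)

lemma convexPos4 (a b c d : Pt) (h1 : det3 b c d ≠ 0) (h2 : det3 a c d ≠ 0)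
    (h3 : det3 a b d ≠ 0) (h4 : det3 a b c ≠ 0) :
    ConvexPos ({a, b, c, d} : Finset Pt) ↔
      0 < det3 b c d * det3 a c d * det3 a b d * det3 a b c := by
  obtain ⟨hbc, hbd, hcd⟩ := ne_of_det3 h1
  obtain ⟨hab, hac, -⟩ := ne_of_det3 h4
  obtain ⟨-, had, -⟩ := ne_of_det3 h3
  have hco : ∀ u v w : Pt, (↑({u, v, w} : Finset Pt) : Set Pt) = {u, v, w} := by
    intro u v w; simp
  have hea : ({a, b, c, d} : Finset Pt).erase a = {b, c, d} := by
    ext x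
    simp only [Finset.mem_erase, Finset.mem_insert, Finset.mem_singleton]
    constructor
    · rintro ⟨hx, rfl | rfl | rfl | rfl⟩
      · exact absurd rfl hx
      · exact Or.inl rfl
      · exact Or.inr (Or.inl rfl)
      · exact Or.inr (Or.inr rfl)
    · rintro (rfl | rfl | rfl)
      · exact ⟨hab.symm, Or.inr (Or.inl rfl)⟩
      · exact ⟨hac.symm, Or.inr (Or.inr (Or.inl rfl))⟩
      · exact ⟨had.symm, Or.inr (Or.inr (Or.inr rfl))⟩
  have heb : ({a, b, c, d} : Finset Pt).erase b = {a, c, d} := by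
    ext x
    simp only [Finset.mem_erase, Finset.mem_insert, Finset.mem_singleton]
    constructor
    · rintro ⟨hx, rfl | rfl | rfl | rfl⟩
      · exact Or.inl rfl
      · exact absurd rfl hx
      · exact Or.inr (Or.inl rfl)
      · exact Or.inr (Or.inr rfl)
    · rintro (rfl | rfl | rfl)
      · exact ⟨hab, Or.inl rfl⟩
      · exact ⟨hbc.symm, Or.inr (Or.inr (Or.inl rfl))⟩
      · exact ⟨hbd.symm, Or.inr (Or.inr (Or.inr rfl))⟩
  have hec : ({a, b, c, d} : Finset Pt).erase c = {a, b, d} := by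
    ext x
    simp only [Finset.mem_erase, Finset.mem_insert, Finset.mem_singleton]
    constructor
    · rintro ⟨hx, rfl | rfl | rfl | rfl⟩
      · exact Or.inl rfl
      · exact Or.inr (Or.inl rfl)
      · exact absurd rfl hx
      · exact Or.inr (Or.inr rfl)
    · rintro (rfl | rfl | rfl)
      · exact ⟨hac, Or.inl rfl⟩
      · exact ⟨hbc, Or.inr (Or.inl rfl)⟩
      · exact ⟨hcd.symm, Or.inr (Or.inr (Or.inr rfl))⟩
  have hed : ({a, b, c, d} : Finset Pt).erase d = {a, b, c} := by
    ext x
    simp only [Finset.mem_erase, Finset.mem_insert, Finset.mem_singleton]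
    constructor
    · rintro ⟨hx, rfl | rfl | rfl | rfl⟩
      · exact Or.inl rfl
      · exact Or.inr (Or.inl rfl)
      · exact Or.inr (Or.inr rfl)
      · exact absurd rfl hx
    · rintro (rfl | rfl | rfl)
      · exact ⟨had, Or.inl rfl⟩
      · exact ⟨hbd, Or.inr (Or.inl rfl)⟩
      · exact ⟨hcd, Or.inr (Or.inr (Or.inl rfl))⟩
  have hcp : ConvexPos ({a, b, c, d} : Finset Pt) ↔
      (a ∉ convexHull ℝ ({b, c, d} : Set Pt) ∧ b ∉ convexHull ℝ ({a, c, d} : Set Pt) ∧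
       c ∉ convexHull ℝ ({a, b, d} : Set Pt) ∧ d ∉ convexHull ℝ ({a, b, c} : Set Pt)) := by
    constructor
    · intro h
      refine ⟨?_, ?_, ?_, ?_⟩
      · have := h a (by simp); rw [hea, hco] at this; exact this
      · have := h b (by simp); rw [heb, hco] at this; exact this
      · have := h c (by simp); rw [hec, hco] at this; exact this
      · have := h d (by simp); rw [hed, hco] at this; exact this
    · rintro ⟨ha, hb, hc, hd⟩ x hx
      simp only [Finset.mem_insert, Finset.mem_singleton] at hx
      rcases hx with rfl | rfl | rfl | rfl
      · rw [hea, hco]; exact ha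
      · rw [heb, hco]; exact hb
      · rw [hec, hco]; exact hc
      · rw [hed, hco]; exact hd
  rw [hcp, mem_triangle_iff b c d a h1, mem_triangle_iff a c d b h2,
    mem_triangle_iff a b d c h3, mem_triangle_iff a b c d h4]
  have r1 : det3 c d a = det3 a c d := by simp [det3]; ring
  have r2 : det3 d b a = -det3 a b d := by simp [det3]; ring
  have r3 : det3 b c a = det3 a b c := by simp [det3]; ring
  have r4 : det3 c d b = det3 b c d := by simp [det3]; ring
  have r5 : det3 d a b = det3 a b d := by simp [det3]; ring
  have r6 : det3 a c b = -det3 a b c := by simp [det3]; ring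
  have r7 : det3 b d c = -det3 b c d := by simp [det3]; ring
  have r8 : det3 d a c = det3 a c d := by simp [det3]; ring
  have r9 : det3 c a d = -det3 a c d := by simp [det3]; ring
  rw [r1, r2, r3, r4, r5, r6, r7, r8, r9]
  rw [← sign_key (det3 b c d) (det3 a c d) (det3 a b d) (det3 a b c) h1 h2 h3 h4]

lemma sign_transfer (E1 E2 E3 E4 F1 F2 F3 F4 : ℝ) (p1 : 0 < E1 * F1) (p2 : 0 < E2 * F2)
    (p3 : 0 < E3 * F3) (p4 : 0 < E4 * F4) :
    (0 < F1 * F2 * F3 * F4 ↔ 0 < E1 * E2 * E3 * E4) := by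
  constructor <;> intro h <;>
    nlinarith [mul_pos (mul_pos p1 p2) (mul_pos p3 p4)]

lemma sign_transfer_neg (E1 E2 E3 E4 F1 F2 F3 F4 : ℝ) (p1 : 0 < E1 * F1) (p2 : 0 < E2 * F2)
    (p3 : 0 < E3 * F3) (p4 : E4 * F4 < 0) (hne : E1 * E2 * E3 * E4 ≠ 0) :
    (0 < F1 * F2 * F3 * F4 ↔ ¬ (0 < E1 * E2 * E3 * E4)) := by
  have hEF : (E1 * E2 * E3 * E4) * (F1 * F2 * F3 * F4) < 0 := by
    nlinarith [mul_pos (mul_pos p1 p2) p3]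
  constructor
  · intro h hE
    nlinarith
  · intro h
    have hE : E1 * E2 * E3 * E4 < 0 := (not_lt.mp h).lt_of_ne hne
    nlinarith

lemma card4 {α : Type*} [DecidableEq α] {s : Finset α} (h : s.card = 4) :
    ∃ a b c d : α, a ≠ b ∧ a ≠ c ∧ a ≠ d ∧ b ≠ c ∧ b ≠ d ∧ c ≠ d ∧ s = {a, b, c, d} := by
  obtain ⟨a, t, hat, rfl, ht⟩ := Finset.card_eq_succ.mp h
  obtain ⟨b, c, d, hbc, hbd, hcd, rfl⟩ := Finset.card_eq_three.mp ht
  simp only [Finset.mem_insert, Finset.mem_singleton, not_or] at hat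
  exact ⟨a, b, c, d, hat.1, hat.2.1, hat.2.2, hbc, hbd, hcd, rfl⟩

lemma cross_sign (gA gA' gC t u : ℝ) (hg : 0 < gA * gA') (hgA : gA ≠ 0)
    (ht0 : 0 < t) (ht1 : t < 1) (hu : 0 < u)
    (heq : (1 - t) * gA + t * gA' = u * gC) : 0 < gC * gA := by
  have h5 : 0 < u * (gC * gA) := by
    have heq2 : u * (gC * gA) = (1 - t) * (gA * gA) + t * (gA' * gA) := by
      linear_combination (-gA) * heq
    rw [heq2]
    nlinarith [mul_pos (sub_pos.mpr ht1) (mul_self_pos.mpr hgA), mul_pos ht0 hg]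
  nlinarith [h5, hu]

lemma opp_sign (e1 e2 e3 : ℝ) (k1 : 0 < -e1 * e3) (k2 : 0 < e1 * e2) (h1 : e1 ≠ 0) :
    e2 * e3 < 0 := by
  nlinarith [mul_pos k1 k2, mul_self_pos.mpr h1]

lemma conv_iff (e1 e2 e3 e4 : ℝ) (h23 : e2 * e3 < 0) (h14 : e1 * e4 ≠ 0) :
    (0 < e1 * e2 * e3 * e4 ↔ ¬ (0 < e1 * e4)) := by
  constructor
  · intro h h'
    nlinarith [mul_pos h' (neg_pos.mpr h23)]
  · intro h'
    have h14' : e1 * e4 < 0 := (not_lt.mp h').lt_of_ne h14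
    nlinarith [mul_pos_of_neg_of_neg h14' h23]

set_option maxHeartbeats 2000000 in
/-- a `k`-mutation increases the number of crossings by `2k - n + 3`.
`P` and `P'` are the configurations before and after the mutation: only the point
with label `i₁` moves, crossing the open segment spanned by the points labelled
`i₂, i₃`, the orientation of the triple `i₁ i₂ i₃` is reversed, and no other triple
changes orientation.  `k` is the number of other points lying, before the mutation,
on the same side of the line `i₂ i₃` as the moving point `i₁`. -/
theorem statement0 (n : ℕ) (P P' : Fin n → Pt) (i₁ i₂ i₃ : Fin n)
    (h12 : i₁ ≠ i₂) (h13 : i₁ ≠ i₃) (h23 : i₂ ≠ i₃)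
    (hfix : ∀ i, i ≠ i₁ → P' i = P i)
    (hgp : GenPosI P) (hgp' : GenPosI P')
    (hflip : detI P i₁ i₂ i₃ * detI P' i₁ i₂ i₃ < 0)
    (hothers : ∀ j₁ j₂ j₃ : Fin n, j₁ ≠ j₂ → j₁ ≠ j₃ → j₂ ≠ j₃ →
      ({j₁, j₂, j₃} : Finset (Fin n)) ≠ {i₁, i₂, i₃} →
      0 < detI P j₁ j₂ j₃ * detI P' j₁ j₂ j₃)
    (hseg : ∃ t ∈ Set.Ioo (0:ℝ) 1, ∃ u ∈ Set.Ioo (0:ℝ) 1,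
      (1 - t) • P i₁ + t • P' i₁ = (1 - u) • P i₂ + u • P i₃)
    (k : ℕ)
    (hk : k = ((univ : Finset (Fin n)).filter (fun j => j ≠ i₁ ∧ j ≠ i₂ ∧ j ≠ i₃ ∧
      0 < det3 (P i₂) (P i₃) (P j) * det3 (P i₂) (P i₃) (P i₁))).card) :
    (crI P' : ℤ) = crI P + (2 * (k : ℤ) - n + 3) := by
  classical
  set F := ((univ : Finset (Fin n)).powersetCard 4) with hF
  set T : Finset (Fin n) := {i₁, i₂, i₃} with hT
  have hTcard : T.card = 3 := by
    rw [hT]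
    rw [Finset.card_insert_of_notMem (by simp [h12, h13]),
      Finset.card_insert_of_notMem (by simp [h23]), Finset.card_singleton]
  have hn3 : 3 ≤ n := by
    have := Finset.card_le_univ T
    simpa [hTcard] using this
  -- L1 : quadruples not containing T keep their status
  have L1 : ∀ Q ∈ F, ¬ T ⊆ Q → (ConvexPos (Q.image P') ↔ ConvexPos (Q.image P)) := by
    intro Q hQF hQT
    have hQc : Q.card = 4 := (Finset.mem_powersetCard.mp hQF).2
    obtain ⟨w, x, y, z, hwx, hwy, hwz, hxy, hxz, hyz, rfl⟩ := card4 hQc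
    have himg : ∀ R : Fin n → Pt,
        ({w, x, y, z} : Finset (Fin n)).image R = {R w, R x, R y, R z} := by
      intro R; simp [Finset.image_insert]
    rw [himg P, himg P']
    have hne1 : ({x, y, z} : Finset (Fin n)) ≠ T := by
      intro h
      exact hQT (h ▸ Finset.subset_insert w {x, y, z})
    have hne2 : ({w, y, z} : Finset (Fin n)) ≠ T := by
      intro h
      refine hQT (h ▸ ?_)
      intro u hu; simp only [Finset.mem_insert, Finset.mem_singleton] at hu ⊢; tauto
    have hne3 : ({w, x, z} : Finset (Fin n)) ≠ T := by
      intro h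
      refine hQT (h ▸ ?_)
      intro u hu; simp only [Finset.mem_insert, Finset.mem_singleton] at hu ⊢; tauto
    have hne4 : ({w, x, y} : Finset (Fin n)) ≠ T := by
      intro h
      refine hQT (h ▸ ?_)
      intro u hu; simp only [Finset.mem_insert, Finset.mem_singleton] at hu ⊢; tauto
    have p1 : 0 < det3 (P x) (P y) (P z) * det3 (P' x) (P' y) (P' z) :=
      hothers x y z hxy hxz hyz hne1
    have p2 : 0 < det3 (P w) (P y) (P z) * det3 (P' w) (P' y) (P' z) :=
      hothers w y z hwy hwz hyz hne2
    have p3 : 0 < det3 (P w) (P x) (P z) * det3 (P' w) (P' x) (P' z) :=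
      hothers w x z hwx hwz hxz hne3
    have p4 : 0 < det3 (P w) (P x) (P y) * det3 (P' w) (P' x) (P' y) :=
      hothers w x y hwx hwy hxy hne4
    rw [convexPos4 (P' w) (P' x) (P' y) (P' z) (hgp' x y z hxy hxz hyz)
        (hgp' w y z hwy hwz hyz) (hgp' w x z hwx hwz hxz) (hgp' w x y hwx hwy hxy),
      convexPos4 (P w) (P x) (P y) (P z) (hgp x y z hxy hxz hyz)
        (hgp w y z hwy hwz hyz) (hgp w x z hwx hwz hxz) (hgp w x y hwx hwy hxy)]
    exact sign_transfer _ _ _ _ _ _ _ _ p1 p2 p3 p4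

  -- useful fixed-point facts
  have hfb : P' i₂ = P i₂ := hfix i₂ (Ne.symm h12)
  have hfc : P' i₃ = P i₃ := hfix i₃ (Ne.symm h13)
  -- L2 : quadruples containing T flip their status
  have L2 : ∀ j, j ∉ T → (ConvexPos ((insert j T).image P') ↔ ¬ ConvexPos ((insert j T).image P)) := by
    intro j hjT
    have hj1 : j ≠ i₁ := by rintro rfl; exact hjT (by simp [hT])
    have hj2 : j ≠ i₂ := by rintro rfl; exact hjT (by simp [hT])
    have hj3 : j ≠ i₃ := by rintro rfl; exact hjT (by simp [hT])
    have himg : ∀ R : Fin n → Pt, (insert j T).image R = {R i₁, R i₂, R i₃, R j} := by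
      intro R
      rw [hT]
      simp only [Finset.image_insert, Finset.image_singleton]
      ext u
      simp only [Finset.mem_insert, Finset.mem_singleton]
      tauto
    have hs1 : ({i₂, i₃, j} : Finset (Fin n)) ≠ T := by
      intro h; exact hjT (h ▸ (by simp : j ∈ ({i₂, i₃, j} : Finset (Fin n))))
    have hs2 : ({i₁, i₃, j} : Finset (Fin n)) ≠ T := by
      intro h; exact hjT (h ▸ (by simp : j ∈ ({i₁, i₃, j} : Finset (Fin n))))
    have hs3 : ({i₁, i₂, j} : Finset (Fin n)) ≠ T := by
      intro h; exact hjT (h ▸ (by simp : j ∈ ({i₁, i₂, j} : Finset (Fin n))))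
    have p1 : 0 < det3 (P i₂) (P i₃) (P j) * det3 (P' i₂) (P' i₃) (P' j) :=
      hothers i₂ i₃ j h23 (Ne.symm hj2) (Ne.symm hj3) hs1
    have p2 : 0 < det3 (P i₁) (P i₃) (P j) * det3 (P' i₁) (P' i₃) (P' j) :=
      hothers i₁ i₃ j h13 (Ne.symm hj1) (Ne.symm hj3) hs2
    have p3 : 0 < det3 (P i₁) (P i₂) (P j) * det3 (P' i₁) (P' i₂) (P' j) :=
      hothers i₁ i₂ j h12 (Ne.symm hj1) (Ne.symm hj2) hs3
    have p4 : det3 (P i₁) (P i₂) (P i₃) * det3 (P' i₁) (P' i₂) (P' i₃) < 0 := hflip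
    have hne : det3 (P i₂) (P i₃) (P j) * det3 (P i₁) (P i₃) (P j) *
        det3 (P i₁) (P i₂) (P j) * det3 (P i₁) (P i₂) (P i₃) ≠ 0 :=
      mul_ne_zero (mul_ne_zero (mul_ne_zero
        (hgp i₂ i₃ j h23 (Ne.symm hj2) (Ne.symm hj3))
        (hgp i₁ i₃ j h13 (Ne.symm hj1) (Ne.symm hj3)))
        (hgp i₁ i₂ j h12 (Ne.symm hj1) (Ne.symm hj2)))
        (hgp i₁ i₂ i₃ h12 h13 h23)
    rw [himg P', himg P,
      convexPos4 (P' i₁) (P' i₂) (P' i₃) (P' j)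
        (hgp' i₂ i₃ j h23 (Ne.symm hj2) (Ne.symm hj3))
        (hgp' i₁ i₃ j h13 (Ne.symm hj1) (Ne.symm hj3))
        (hgp' i₁ i₂ j h12 (Ne.symm hj1) (Ne.symm hj2))
        (hgp' i₁ i₂ i₃ h12 h13 h23),
      convexPos4 (P i₁) (P i₂) (P i₃) (P j)
        (hgp i₂ i₃ j h23 (Ne.symm hj2) (Ne.symm hj3))
        (hgp i₁ i₃ j h13 (Ne.symm hj1) (Ne.symm hj3))
        (hgp i₁ i₂ j h12 (Ne.symm hj1) (Ne.symm hj2))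
        (hgp i₁ i₂ i₃ h12 h13 h23)]
    exact sign_transfer_neg _ _ _ _ _ _ _ _ p1 p2 p3 p4 hne
  -- Lside : before the mutation, the quadruple on j is convex iff j is on the
  -- opposite side of the line i₂ i₃ from i₁.
  have Lside : ∀ j, j ∉ T → (ConvexPos ((insert j T).image P) ↔
      ¬ (0 < det3 (P i₂) (P i₃) (P j) * det3 (P i₂) (P i₃) (P i₁))) := by
    intro j hjT
    have hj1 : j ≠ i₁ := by rintro rfl; exact hjT (by simp [hT])
    have hj2 : j ≠ i₂ := by rintro rfl; exact hjT (by simp [hT])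
    have hj3 : j ≠ i₃ := by rintro rfl; exact hjT (by simp [hT])
    have himg : (insert j T).image P = {P i₁, P i₂, P i₃, P j} := by
      rw [hT]
      simp only [Finset.image_insert, Finset.image_singleton]
      ext u
      simp only [Finset.mem_insert, Finset.mem_singleton]
      tauto
    have he1 : det3 (P i₂) (P i₃) (P j) ≠ 0 := hgp i₂ i₃ j h23 (Ne.symm hj2) (Ne.symm hj3)
    have he2 : det3 (P i₁) (P i₃) (P j) ≠ 0 := hgp i₁ i₃ j h13 (Ne.symm hj1) (Ne.symm hj3)
    have he3 : det3 (P i₁) (P i₂) (P j) ≠ 0 := hgp i₁ i₂ j h12 (Ne.symm hj1) (Ne.symm hj2)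
    have he4 : det3 (P i₁) (P i₂) (P i₃) ≠ 0 := hgp i₁ i₂ i₃ h12 h13 h23
    rw [himg, convexPos4 (P i₁) (P i₂) (P i₃) (P j) he1 he2 he3 he4]
    obtain ⟨t, ⟨ht0, ht1⟩, u, ⟨hu0, hu1⟩, hx⟩ := hseg
    -- first product fact : sign of det3 (P i₂) (P j) · is constant on the moving segment
    have hs3 : ({i₁, i₂, j} : Finset (Fin n)) ≠ T := by
      intro h; exact hjT (h ▸ (by simp : j ∈ ({i₁, i₂, j} : Finset (Fin n))))
    have hs2 : ({i₁, i₃, j} : Finset (Fin n)) ≠ T := by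
      intro h; exact hjT (h ▸ (by simp : j ∈ ({i₁, i₃, j} : Finset (Fin n))))
    have p3 : 0 < det3 (P i₁) (P i₂) (P j) * det3 (P' i₁) (P i₂) (P j) := by
      have := hothers i₁ i₂ j h12 (Ne.symm hj1) (Ne.symm hj2) hs3
      simp only [detI] at this
      rwa [hfb, hfix j hj1] at this
    have p2 : 0 < det3 (P i₁) (P i₃) (P j) * det3 (P' i₁) (P i₃) (P j) := by
      have := hothers i₁ i₃ j h13 (Ne.symm hj1) (Ne.symm hj3) hs2
      simp only [detI] at this
      rwa [hfc, hfix j hj1] at this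
    -- transfer to the line (P i₂, P j)
    have hg : 0 < det3 (P i₂) (P j) (P i₁) * det3 (P i₂) (P j) (P' i₁) := by
      rw [show det3 (P i₂) (P j) (P i₁) = det3 (P i₁) (P i₂) (P j) from by simp [det3]; ring,
        show det3 (P i₂) (P j) (P' i₁) = det3 (P' i₁) (P i₂) (P j) from by simp [det3]; ring]
      exact p3
    have hh : 0 < det3 (P i₃) (P j) (P i₁) * det3 (P i₃) (P j) (P' i₁) := by
      rw [show det3 (P i₃) (P j) (P i₁) = det3 (P i₁) (P i₃) (P j) from by simp [det3]; ring,
        show det3 (P i₃) (P j) (P' i₁) = det3 (P' i₁) (P i₃) (P j) from by simp [det3]; ring]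
      exact p2
    have hgA : det3 (P i₂) (P j) (P i₁) ≠ 0 := fun h => he3 (by
      rw [show det3 (P i₁) (P i₂) (P j) = det3 (P i₂) (P j) (P i₁) from by simp [det3]; ring, h])
    have hhA : det3 (P i₃) (P j) (P i₁) ≠ 0 := fun h => he2 (by
      rw [show det3 (P i₁) (P i₃) (P j) = det3 (P i₃) (P j) (P i₁) from by simp [det3]; ring, h])
    -- evaluate at the crossing point
    have hgx1 : det3 (P i₂) (P j) ((1 - t) • P i₁ + t • P' i₁)
        = (1 - t) * det3 (P i₂) (P j) (P i₁) + t * det3 (P i₂) (P j) (P' i₁) :=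
      det3_affine2 _ _ _ _ _ _ (by ring)
    have hgx2 : det3 (P i₂) (P j) ((1 - u) • P i₂ + u • P i₃)
        = u * det3 (P i₂) (P j) (P i₃) := by
      rw [det3_affine2 _ _ _ _ _ _ (by ring), det3_self₁]
      ring
    have hgeq : (1 - t) * det3 (P i₂) (P j) (P i₁) + t * det3 (P i₂) (P j) (P' i₁)
        = u * det3 (P i₂) (P j) (P i₃) := by
      rw [← hgx1, ← hgx2, hx]
    have key1 : 0 < det3 (P i₂) (P j) (P i₃) * det3 (P i₂) (P j) (P i₁) :=
      cross_sign _ _ _ t u hg hgA ht0 ht1 hu0 hgeq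
    have hhx1 : det3 (P i₃) (P j) ((1 - t) • P i₁ + t • P' i₁)
        = (1 - t) * det3 (P i₃) (P j) (P i₁) + t * det3 (P i₃) (P j) (P' i₁) :=
      det3_affine2 _ _ _ _ _ _ (by ring)
    have hhx2 : det3 (P i₃) (P j) ((1 - u) • P i₂ + u • P i₃)
        = (1 - u) * det3 (P i₃) (P j) (P i₂) := by
      rw [det3_affine2 _ _ _ _ _ _ (by ring), det3_self₁]
      ring
    have hheq : (1 - t) * det3 (P i₃) (P j) (P i₁) + t * det3 (P i₃) (P j) (P' i₁)
        = (1 - u) * det3 (P i₃) (P j) (P i₂) := by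
      rw [← hhx1, ← hhx2, hx]
    have key2 : 0 < det3 (P i₃) (P j) (P i₂) * det3 (P i₃) (P j) (P i₁) :=
      cross_sign _ _ _ t (1 - u) hh hhA ht0 ht1 (sub_pos.mpr hu1) hheq
    -- rewrite the two key facts in canonical form
    have key1' : 0 < -det3 (P i₂) (P i₃) (P j) * det3 (P i₁) (P i₂) (P j) := by
      have r1 : det3 (P i₂) (P j) (P i₃) = -det3 (P i₂) (P i₃) (P j) := by simp [det3]; ring
      have r2 : det3 (P i₂) (P j) (P i₁) = det3 (P i₁) (P i₂) (P j) := by simp [det3]; ring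
      rw [r1, r2] at key1
      exact key1
    have key2' : 0 < det3 (P i₂) (P i₃) (P j) * det3 (P i₁) (P i₃) (P j) := by
      have r1 : det3 (P i₃) (P j) (P i₂) = det3 (P i₂) (P i₃) (P j) := by simp [det3]; ring
      have r2 : det3 (P i₃) (P j) (P i₁) = det3 (P i₁) (P i₃) (P j) := by simp [det3]; ring
      rw [r1, r2] at key2
      exact key2
    have he23 : det3 (P i₁) (P i₃) (P j) * det3 (P i₁) (P i₂) (P j) < 0 :=
      opp_sign _ _ _ key1' key2' he1
    have hr3 : det3 (P i₂) (P i₃) (P i₁) = det3 (P i₁) (P i₂) (P i₃) := by simp [det3]; ring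
    rw [hr3]
    exact conv_iff _ _ _ _ he23 (mul_ne_zero he1 he4)
  -- counting quadruples containing T
  have count_quad : ∀ π : Finset (Fin n) → Prop,
      (F.filter (fun Q => T ⊆ Q ∧ π Q)).card
        = ((univ : Finset (Fin n)).filter (fun j => j ∉ T ∧ π (insert j T))).card := by
    intro π
    have himg : F.filter (fun Q => T ⊆ Q ∧ π Q)
        = ((univ : Finset (Fin n)).filter (fun j => j ∉ T ∧ π (insert j T))).image
            (fun j => insert j T) := by
      ext Q
      simp only [Finset.mem_filter, Finset.mem_image, hF, Finset.mem_powersetCard_univ,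
        Finset.mem_univ, true_and]
      constructor
      · rintro ⟨hc4, hTQ, hπ⟩
        have hsd : (Q \ T).card = 1 := by
          rw [Finset.card_sdiff_of_subset hTQ, hc4, hTcard]
        obtain ⟨j, hj⟩ := Finset.card_eq_one.mp hsd
        have hjmem : j ∈ Q \ T := hj ▸ Finset.mem_singleton_self j
        have hjT : j ∉ T := (Finset.mem_sdiff.mp hjmem).2
        have hQ : Q = insert j T := by
          have h1 := Finset.union_sdiff_of_subset hTQ
          rw [hj] at h1
          rw [← h1, Finset.union_comm, ← Finset.insert_eq]
        exact ⟨j, ⟨hjT, hQ ▸ hπ⟩, hQ.symm⟩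
      · rintro ⟨j, ⟨hjT, hπ⟩, rfl⟩
        refine ⟨?_, Finset.subset_insert j T, hπ⟩
        rw [Finset.card_insert_of_notMem hjT, hTcard]
    rw [himg, Finset.card_image_of_injOn]
    intro j hj j' hj' he
    simp only [Finset.coe_filter, Set.mem_setOf_eq] at hj hj'
    have he' : insert j T = insert j' T := he
    have hmem : j ∈ insert j' T := he' ▸ Finset.mem_insert_self j T
    rcases Finset.mem_insert.mp hmem with h | h
    · exact h
    · exact absurd h hj.2.1
  -- splitting the count
  have hsplit : ∀ π : Finset (Fin n) → Prop,
      (F.filter π).card = (F.filter (fun Q => ¬ T ⊆ Q ∧ π Q)).card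
        + (F.filter (fun Q => T ⊆ Q ∧ π Q)).card := by
    intro π
    have h0 := Finset.card_filter_add_card_filter_not
      (s := F.filter π) (p := fun Q => T ⊆ Q)
    have h1 : (F.filter π).filter (fun Q => T ⊆ Q) = F.filter (fun Q => T ⊆ Q ∧ π Q) := by
      ext Q; simp only [Finset.mem_filter]; tauto
    have h2 : (F.filter π).filter (fun Q => ¬ T ⊆ Q) = F.filter (fun Q => ¬ T ⊆ Q ∧ π Q) := by
      ext Q; simp only [Finset.mem_filter]; tauto
    rw [h1, h2] at h0
    omega
  have hcr' : crI P' = (F.filter (fun Q => ConvexPos (Q.image P'))).card := rfl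
  have hcr : crI P = (F.filter (fun Q => ConvexPos (Q.image P))).card := rfl
  have e1 := hsplit (fun Q => ConvexPos (Q.image P'))
  have e2 := hsplit (fun Q => ConvexPos (Q.image P))
  have eA : F.filter (fun Q => ¬ T ⊆ Q ∧ ConvexPos (Q.image P'))
      = F.filter (fun Q => ¬ T ⊆ Q ∧ ConvexPos (Q.image P)) := by
    ext Q
    simp only [Finset.mem_filter]
    constructor
    · rintro ⟨hQF, hnT, hC⟩
      exact ⟨hQF, hnT, (L1 Q hQF hnT).mp hC⟩
    · rintro ⟨hQF, hnT, hC⟩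
      exact ⟨hQF, hnT, (L1 Q hQF hnT).mpr hC⟩
  have eB' : (F.filter (fun Q => T ⊆ Q ∧ ConvexPos (Q.image P'))).card = k := by
    rw [count_quad, hk]
    congr 1
    ext j
    simp only [Finset.mem_filter, Finset.mem_univ, true_and]
    constructor
    · rintro ⟨hjT, hC'⟩
      have hj1 : j ≠ i₁ := by rintro rfl; exact hjT (by simp [hT])
      have hj2 : j ≠ i₂ := by rintro rfl; exact hjT (by simp [hT])
      have hj3 : j ≠ i₃ := by rintro rfl; exact hjT (by simp [hT])
      refine ⟨hj1, hj2, hj3, ?_⟩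
      have := (L2 j hjT).mp hC'
      have h2 := (Lside j hjT)
      by_contra hside
      exact this (h2.mpr hside)
    · rintro ⟨hj1, hj2, hj3, hside⟩
      have hjT : j ∉ T := by simp [hT, hj1, hj2, hj3]
      refine ⟨hjT, ?_⟩
      refine (L2 j hjT).mpr ?_
      intro hC
      exact ((Lside j hjT).mp hC) hside
  have eB : (F.filter (fun Q => T ⊆ Q ∧ ConvexPos (Q.image P))).card
      = ((univ : Finset (Fin n)).filter (fun j => j ∉ T ∧
          ¬ (0 < det3 (P i₂) (P i₃) (P j) * det3 (P i₂) (P i₃) (P i₁)))).card := by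
    rw [count_quad]
    congr 1
    ext j
    simp only [Finset.mem_filter, Finset.mem_univ, true_and]
    constructor
    · rintro ⟨hjT, hC⟩
      exact ⟨hjT, (Lside j hjT).mp hC⟩
    · rintro ⟨hjT, hside⟩
      exact ⟨hjT, (Lside j hjT).mpr hside⟩
  -- k + (opposite side count) = n - 3
  have hkB : k + ((univ : Finset (Fin n)).filter (fun j => j ∉ T ∧
      ¬ (0 < det3 (P i₂) (P i₃) (P j) * det3 (P i₂) (P i₃) (P i₁)))).card = n - 3 := by
    have h0 := Finset.card_filter_add_card_filter_not
      (s := (univ : Finset (Fin n)).filter (fun j => j ∉ T))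
      (p := fun j => 0 < det3 (P i₂) (P i₃) (P j) * det3 (P i₂) (P i₃) (P i₁))
    have hcard : ((univ : Finset (Fin n)).filter (fun j => j ∉ T)).card = n - 3 := by
      have : (univ : Finset (Fin n)).filter (fun j => j ∉ T) = univ \ T := by
        ext j; simp [Finset.mem_sdiff]
      rw [this, Finset.card_sdiff_of_subset (Finset.subset_univ T), hTcard, Finset.card_univ,
        Fintype.card_fin]
    have h1 : ((univ : Finset (Fin n)).filter (fun j => j ∉ T)).filter
        (fun j => 0 < det3 (P i₂) (P i₃) (P j) * det3 (P i₂) (P i₃) (P i₁)) =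
        (univ : Finset (Fin n)).filter (fun j => j ≠ i₁ ∧ j ≠ i₂ ∧ j ≠ i₃ ∧
          0 < det3 (P i₂) (P i₃) (P j) * det3 (P i₂) (P i₃) (P i₁)) := by
      ext j
      simp only [Finset.mem_filter, Finset.mem_univ, true_and, hT,
        Finset.mem_insert, Finset.mem_singleton, not_or]
      tauto
    have h2 : ((univ : Finset (Fin n)).filter (fun j => j ∉ T)).filter
        (fun j => ¬ (0 < det3 (P i₂) (P i₃) (P j) * det3 (P i₂) (P i₃) (P i₁))) =
        (univ : Finset (Fin n)).filter (fun j => j ∉ T ∧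
          ¬ (0 < det3 (P i₂) (P i₃) (P j) * det3 (P i₂) (P i₃) (P i₁))) := by
      ext j
      simp only [Finset.mem_filter, Finset.mem_univ, true_and]
    rw [h1, h2, hcard] at h0
    rw [hk]
    omega
  rw [hcr, hcr', e1, e2, eA, eB', eB]
  omega
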